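/- arXiv:1502.05347 — 4 statements merged into one kernel-verified Lean document; each statement's English description precedes it below -/
import Mathlib

section
/- For the planar vector field dx/dt = -ω J x + (-2βω + k_t/(ω(‖x‖+ε))) x₂ e₂ with ω, β, k_t, ε > 0, the radial derivative satisfies xᵀẋ = x₂²(-2βω + k_t/(ω(‖x‖+ε))), which is positive whenever 0 < ‖x‖ < k_t/(2βω²) − ε and negative whenever ‖x‖ > k_t/(2βω²) − ε. -/
/-! The rotation part `-ωJx` is tangential, so only the damping/forcing term acting on `x₂`
contributes to `xᵀẋ`, giving `x₂² g(‖x‖)` with gain `g(r) = -2βω + k_t/(ω(r+ε))`. Since `g` is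
decreasing in `r + ε > 0`, it changes sign exactly at `r + ε = k_t/(2βω²)`. -/

lemma radial_derivative_eq (ω g : ℝ) (x : ℝ × ℝ) :
    x.1 * (ω * x.2) + x.2 * (-ω * x.1 + g * x.2) = x.2 ^ 2 * g := by
  ring

section DampingGain

variable {ω β kt r : ℝ}

lemma damping_gain_eq (hω : ω ≠ 0) (hr : r ≠ 0) :
    -2 * β * ω + kt / (ω * r) = (kt - 2 * β * ω ^ 2 * r) / (ω * r) := by
  field_simp
  ring

lemma damping_gain_pos_iff (hω : 0 < ω) (hβ : 0 < β) (hr : 0 < r) :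
    0 < -2 * β * ω + kt / (ω * r) ↔ r < kt / (2 * β * ω ^ 2) := by
  rw [damping_gain_eq hω.ne' hr.ne', div_pos_iff_of_pos_right (by positivity), sub_pos,
    lt_div_iff₀ (by positivity), mul_comm]

lemma damping_gain_neg_iff (hω : 0 < ω) (hβ : 0 < β) (hr : 0 < r) :
    -2 * β * ω + kt / (ω * r) < 0 ↔ kt / (2 * β * ω ^ 2) < r := by
  rw [damping_gain_eq hω.ne' hr.ne', div_lt_iff₀ (by positivity), zero_mul, sub_neg,
    div_lt_iff₀ (by positivity), mul_comm]

end DampingGain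

theorem stmt_0_general (ω β kt ε : ℝ) (hω : 0 < ω) (hβ : 0 < β) (hε : 0 < ε)
    (x : ℝ × ℝ)
    (n : ℝ) (hn : n = Real.sqrt (x.1 ^ 2 + x.2 ^ 2))
    (f : ℝ × ℝ) (hf : f = (ω * x.2,
      -ω * x.1 + (-2 * β * ω + kt / (ω * (n + ε))) * x.2)) :
    x.1 * f.1 + x.2 * f.2 = x.2 ^ 2 * (-2 * β * ω + kt / (ω * (n + ε))) ∧
    (x.2 ≠ 0 → 0 < n → n < kt / (2 * β * ω ^ 2) - ε →
      0 < x.1 * f.1 + x.2 * f.2) ∧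
    (x.2 ≠ 0 → kt / (2 * β * ω ^ 2) - ε < n →
      x.1 * f.1 + x.2 * f.2 < 0) := by
  have hr : 0 < n + ε := by
    have : 0 ≤ n := hn ▸ Real.sqrt_nonneg _
    linarith
  have heq : x.1 * f.1 + x.2 * f.2 = x.2 ^ 2 * (-2 * β * ω + kt / (ω * (n + ε))) := by
    subst hf
    exact radial_derivative_eq ω _ x
  refine ⟨heq, fun hx₂ _ hlt => ?_, fun hx₂ hgt => ?_⟩
  · rw [heq]
    exact mul_pos (by positivity) ((damping_gain_pos_iff hω hβ hr).2 (by linarith))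
  · rw [heq]
    exact mul_neg_of_pos_of_neg (by positivity) ((damping_gain_neg_iff hω hβ hr).2 (by linarith))

/-- Energy-dissipation computation underlying Proposition 1 (oscillatory spring
energization): for the planar field `ẋ = -ωJx + (-2βω + k_t/(ω(‖x‖+ε))) x₂ e₂`,
the radial derivative `xᵀẋ` equals `x₂²(-2βω + k_t/(ω(‖x‖+ε)))`, which is positive
inside the critical radius `k_t/(2βω²) - ε` and negative outside (for `x₂ ≠ 0`). -/
theorem stmt_0 (ω β kt ε : ℝ) (hω : 0 < ω) (hβ : 0 < β) (hkt : 0 < kt) (hε : 0 < ε)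
    (hcrit : ε < kt / (2 * β * ω ^ 2)) (x : ℝ × ℝ)
    (n : ℝ) (hn : n = Real.sqrt (x.1 ^ 2 + x.2 ^ 2))
    (f : ℝ × ℝ) (hf : f = (ω * x.2,
      -ω * x.1 + (-2 * β * ω + kt / (ω * (n + ε))) * x.2)) :
    x.1 * f.1 + x.2 * f.2 = x.2 ^ 2 * (-2 * β * ω + kt / (ω * (n + ε))) ∧
    (x.2 ≠ 0 → 0 < n → n < kt / (2 * β * ω ^ 2) - ε →
      0 < x.1 * f.1 + x.2 * f.2) ∧
    (x.2 ≠ 0 → kt / (2 * β * ω ^ 2) - ε < n →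
      x.1 * f.1 + x.2 * f.2 < 0) :=
  stmt_0_general ω β kt ε hω hβ hε x n hn f hf
end

section
/- Let F₁ : ℝ → ℝ be a differentiable map with F₁(χ̇*) = −χ̇* at some χ̇* < 0 and define h(χ̇) = −F₁(χ̇)/χ̇ on a neighborhood of χ̇* where χ̇ ≠ 0. If h'(χ̇*) ≠ 0, then h is a local diffeomorphism at χ̇*, h(χ̇*) = 1, and the conjugated map F^v(κ) = h(κ · h⁻¹(κ)) has fixed point κ* = 1 with derivative DF^v(1) = −DF₁(χ̇*). In particular, if −1 < DF₁(χ̇*) < 1 then κ* = 1 is an asymptotically stable fixed point of F^v. -/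
open Filter
open scoped Topology

/-
Away from `0` the velocity gain `h(y) = -F₁(y)/y` is a quotient of `C¹` functions, so it has a
strict derivative at `χ̇*`, equal to `-(DF₁(χ̇*) + 1)/χ̇*` because `F₁(χ̇*) = -χ̇*`. When this is
nonzero the inverse function theorem gives a local inverse `g` of `h` near `h(χ̇*) = 1` with
`g'(1) = 1/h'(χ̇*)`. The chain rule for `κ ↦ h(κ g(κ))` at `κ = 1` then gives
`h'(χ̇*) (χ̇* + 1/h'(χ̇*)) = h'(χ̇*) χ̇* + 1 = -DF₁(χ̇*)`.
-/

theorem hasStrictDerivAt_of_eq_neg_div_self {f h : ℝ → ℝ} {x : ℝ} (hx : x ≠ 0)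
    (hf : ContDiffAt ℝ 1 f x) (hh : ∀ y : ℝ, y ≠ 0 → h y = -f y / y) :
    HasStrictDerivAt h ((f x - x * deriv f x) / x ^ 2) x := by
  have hquot : HasStrictDerivAt (fun y => -f y / y) ((-deriv f x * x - -f x * 1) / x ^ 2) x :=
    (hf.hasStrictDerivAt one_ne_zero).neg.fun_div (hasStrictDerivAt_id x) hx
  have heq : (fun y => -f y / y) =ᶠ[𝓝 x] h := by
    filter_upwards [isOpen_ne.mem_nhds hx] with y hy using (hh y hy).symm
  have hslope : (-deriv f x * x - -f x * 1) / x ^ 2 = (f x - x * deriv f x) / x ^ 2 := by ring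
  exact hslope ▸ hquot.congr_of_eventuallyEq heq

theorem hasDerivAt_comp_mul_of_inverse {h g : ℝ → ℝ} {x d : ℝ} (hh : HasDerivAt h d x)
    (hg : HasDerivAt g d⁻¹ 1) (hg1 : g 1 = x) (hd : d ≠ 0) :
    HasDerivAt (fun κ => h (κ * g κ)) (d * x + 1) 1 := by
  have hmul : HasDerivAt (fun κ => κ * g κ) (1 * g 1 + 1 * d⁻¹) 1 := (hasDerivAt_id 1).mul hg
  rw [← hg1, ← one_mul (g 1)] at hh
  have hslope : d * (1 * g 1 + 1 * d⁻¹) = d * x + 1 := by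
    rw [hg1, one_mul, one_mul, mul_add, mul_inv_cancel₀ hd]
  exact hslope ▸ hh.comp (1 : ℝ) hmul

/-- Proposition 2 (Vertical stability): conjugating the touchdown velocity map
through the velocity-gain coordinate `h(χ̇) = -F₁(χ̇)/χ̇` yields a return map
`F^v(κ) = h(κ·h⁻¹(κ))` with fixed point `κ* = 1` and derivative `-DF₁(χ̇*)`;
in particular `κ* = 1` is asymptotically stable when `-1 < DF₁(χ̇*) < 1`. -/
theorem stmt_3 (F₁ : ℝ → ℝ) (χs : ℝ) (hχs : χs < 0)
    (hF₁ : ContDiffAt ℝ 1 F₁ χs) (hfix : F₁ χs = -χs)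
    (h : ℝ → ℝ) (hh : ∀ y : ℝ, y ≠ 0 → h y = -F₁ y / y)
    (hder : deriv h χs ≠ 0) :
    h χs = 1 ∧
    ∃ g : ℝ → ℝ, ContinuousAt g 1 ∧ g 1 = χs ∧
      (∀ᶠ κ in nhds (1 : ℝ), h (g κ) = κ) ∧
      (∀ᶠ y in nhds χs, g (h y) = y) ∧
      ∀ Fv : ℝ → ℝ, (∀ κ : ℝ, Fv κ = h (κ * g κ)) →
        Fv 1 = 1 ∧ HasDerivAt Fv (-(deriv F₁ χs)) 1 ∧
        (-1 < deriv F₁ χs → deriv F₁ χs < 1 → |(-(deriv F₁ χs))| < 1) := by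
  have hχ0 : χs ≠ 0 := hχs.ne
  have hgain : h χs = 1 := by rw [hh χs hχ0, hfix, neg_neg, div_self hχ0]
  have hstrict := hasStrictDerivAt_of_eq_neg_div_self hχ0 hF₁ hh
  set d := (F₁ χs - χs * deriv F₁ χs) / χs ^ 2 with hd_def
  have hd : d ≠ 0 := hstrict.hasDerivAt.deriv ▸ hder
  set g := hstrict.localInverse h d χs hd
  have hinv : HasStrictDerivAt g d⁻¹ 1 := by
    rw [← hgain]
    exact hstrict.to_localInverse hd
  have hg1 : g 1 = χs :=
    hgain ▸ (hstrict.hasStrictFDerivAt_equiv hd).localInverse_apply_image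
  refine ⟨hgain, g, hinv.hasDerivAt.continuousAt, hg1,
    hgain ▸ hstrict.eventually_right_inverse hd, hstrict.eventually_left_inverse hd,
    fun Fv hFv => ⟨?_, ?_, fun hlo hhi => ?_⟩⟩
  · rw [hFv, one_mul, hg1, hgain]
  · have hslope : d * χs + 1 = -deriv F₁ χs := by
      rw [hd_def, hfix]
      field_simp
      ring
    rw [funext hFv, ← hslope]
    exact hasDerivAt_comp_mul_of_inverse hstrict.hasDerivAt hinv.hasDerivAt hg1 hd
  · rw [abs_neg]
    exact abs_lt.mpr ⟨hlo, hhi⟩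
end

section
/- Let P : ℝ × ℝ → ℝ be differentiable, representing fore-aft acceleration a(ẋ, β) = ẋ⁺ − ẋ as a function of forward speed ẋ and touchdown angle β. Suppose there is a differentiable function β* with a(ẋ, β*(ẋ)) = 0, D_{ẋ}β* > 0, and D_β a(ẋ, β*(ẋ)) < 0 at a target speed ẋ*. Then there exists k_p > 0 such that the closed-loop return map ẋ ↦ ẋ + a(ẋ, β*(ẋ) + k_p(ẋ − ẋ*)) has ẋ* as a locally asymptotically stable fixed point, i.e., its derivative at ẋ* lies strictly in (−1, 1). -/
/-!
Differentiating the neutral-angle identity `a(ẋ, β*(ẋ)) = 0` at `ẋ*` kills the total derivative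
of `a` along the neutral curve, so the closed-loop return map has derivative `1 + k_p c` at `ẋ*`,
where `c = D_β a(ẋ*, β*(ẋ*)) < 0`. The deadbeat gain `k_p = -1/c` is positive and makes this
derivative vanish.
-/

open Function

section PartialDerivatives

variable {a : ℝ → ℝ → ℝ} {D : ℝ × ℝ →L[ℝ] ℝ}

theorem HasFDerivAt.hasDerivAt_uncurry_comp {f₁ f₂ : ℝ → ℝ} {f₁' f₂' t : ℝ}
    (hD : HasFDerivAt (uncurry a) D (f₁ t, f₂ t))
    (hf₁ : HasDerivAt f₁ f₁' t) (hf₂ : HasDerivAt f₂ f₂' t) :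
    HasDerivAt (fun s => a (f₁ s) (f₂ s)) (D (f₁', f₂')) t :=
  (hD.comp_hasDerivAt t (hf₁.prodMk hf₂) :)

theorem HasFDerivAt.hasDerivAt_uncurry_right {x y : ℝ}
    (hD : HasFDerivAt (uncurry a) D (x, y)) :
    HasDerivAt (fun b => a x b) (D (0, 1)) y :=
  hD.hasDerivAt_uncurry_comp (hasDerivAt_const y x) (hasDerivAt_id y)

theorem HasFDerivAt.apply_tangent_eq_zero_of_neutral {β : ℝ → ℝ} {β' x : ℝ}
    (hD : HasFDerivAt (uncurry a) D (x, β x)) (hβ : HasDerivAt β β' x)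
    (hneutral : ∀ t, a t (β t) = 0) :
    D (1, β') = 0 := by
  have hcurve := hD.hasDerivAt_uncurry_comp (hasDerivAt_id x) hβ
  simp only [id, hneutral] at hcurve
  exact hcurve.unique (hasDerivAt_const x 0)

theorem HasFDerivAt.hasDerivAt_closedLoop {β : ℝ → ℝ} {β' x₀ : ℝ}
    (hD : HasFDerivAt (uncurry a) D (x₀, β x₀)) (hβ : HasDerivAt β β' x₀)
    (hneutral : ∀ t, a t (β t) = 0) (k : ℝ) :
    HasDerivAt (fun x => x + a x (β x + k * (x - x₀))) (1 + k * D (0, 1)) x₀ := by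
  have hfeedback : HasDerivAt (fun x => k * (x - x₀)) k x₀ := by
    simpa using ((hasDerivAt_id x₀).sub_const x₀).const_mul k
  have hgain : HasDerivAt (fun x => β x + k * (x - x₀)) (β' + k) x₀ := hβ.add hfeedback
  have hD' : HasFDerivAt (uncurry a) D (x₀, β x₀ + k * (x₀ - x₀)) := by simpa using hD
  have hsplit : ((1 : ℝ), β' + k) = (1, β') + k • ((0 : ℝ), (1 : ℝ)) := by simp
  have hloop := hD'.hasDerivAt_uncurry_comp (hasDerivAt_id x₀) hgain
  rw [hsplit, map_add, map_smul, hD.apply_tangent_eq_zero_of_neutral hβ hneutral,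
    zero_add, smul_eq_mul] at hloop
  exact (hasDerivAt_id x₀).add hloop

end PartialDerivatives

theorem stmt_4_general (a : ℝ → ℝ → ℝ) (βs : ℝ → ℝ) (xs : ℝ)
    (ha : Differentiable ℝ (fun p : ℝ × ℝ => a p.1 p.2))
    (hβs : Differentiable ℝ βs)
    (hneutral : ∀ x : ℝ, a x (βs x) = 0)
    (hsens : deriv (fun b => a xs b) (βs xs) < 0) :
    ∃ kp : ℝ, 0 < kp ∧
      ∀ G : ℝ → ℝ, (∀ x : ℝ, G x = x + a x (βs x + kp * (x - xs))) →
        G xs = xs ∧ -1 < deriv G xs ∧ deriv G xs < 1 := by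
  set D := fderiv ℝ (uncurry a) (xs, βs xs)
  have hD : HasFDerivAt (uncurry a) D (xs, βs xs) := (ha (xs, βs xs)).hasFDerivAt
  set c := D (0, 1)
  have hc : c < 0 := by rwa [hD.hasDerivAt_uncurry_right.deriv] at hsens
  refine ⟨-c⁻¹, neg_pos.mpr (inv_lt_zero.mpr hc), fun G hG => ?_⟩
  obtain rfl : G = fun x => x + a x (βs x + -c⁻¹ * (x - xs)) := funext hG
  have hloop := hD.hasDerivAt_closedLoop (hβs xs).hasDerivAt hneutral (-c⁻¹)
  rw [neg_mul, inv_mul_cancel₀ hc.ne, add_neg_cancel] at hloop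
  rw [hloop.deriv]
  exact ⟨by simp [hneutral xs], by norm_num, by norm_num⟩

/-- Proposition 3 (Raibert stepping controller): under the Raibert observations
(neutral touchdown angle `β*` with `a(ẋ, β*(ẋ)) = 0`, monotonicity `Dβ* > 0`,
and `D_β a < 0` at the neutral angle), there is a gain `k_p > 0` such that the
closed-loop return map `ẋ ↦ ẋ + a(ẋ, β*(ẋ) + k_p(ẋ - ẋ*))` has `ẋ*` as a
locally asymptotically stable fixed point (derivative strictly in `(-1,1)`). -/
theorem stmt_4 (a : ℝ → ℝ → ℝ) (βs : ℝ → ℝ) (xs : ℝ)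
    (ha : Differentiable ℝ (fun p : ℝ × ℝ => a p.1 p.2))
    (hβs : Differentiable ℝ βs)
    (hneutral : ∀ x : ℝ, a x (βs x) = 0)
    (hmono : 0 < deriv βs xs)
    (hsens : deriv (fun b => a xs b) (βs xs) < 0) :
    ∃ kp : ℝ, 0 < kp ∧
      ∀ G : ℝ → ℝ, (∀ x : ℝ, G x = x + a x (βs x + kp * (x - xs))) →
        G xs = xs ∧ -1 < deriv G xs ∧ deriv G xs < 1 :=
  stmt_4_general a βs xs ha hβs hneutral hsens
end

section
/- Fix T_s, ρ_l > 0 and k_p ≥ 0, and define β(v) = (T_s/(2ρ_l)) v₁ + k_p (v₁ − v₁*) for v = (v₁, v₂) ∈ ℝ² (affine with Dβ = T_s/(2ρ_l) + k_p on the first coordinate). Define h(v) = R(−β(v)) v. Then for v in the set V = {v : v₂ < −2ρ_l/T_s}, the Jacobian Dh(v) = R(−β(v)) − J R(−β(v)) v Dβ e₁ᵀ is nonsingular, hence h is a local diffeomorphism on V. -/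
noncomputable def mk2 (A B C D : ℝ) (hΔ : A * D - B * C ≠ 0) : (ℝ × ℝ) ≃ₗ[ℝ] (ℝ × ℝ) where
  toFun w := (A * w.1 + B * w.2, C * w.1 + D * w.2)
  invFun w := ((D * w.1 - B * w.2) / (A * D - B * C),
               (-C * w.1 + A * w.2) / (A * D - B * C))
  map_add' x y := by
    simp only [Prod.fst_add, Prod.snd_add, Prod.mk_add_mk]
    exact Prod.ext (by ring) (by ring)
  map_smul' r x := by
    simp only [Prod.smul_fst, Prod.smul_snd, Prod.smul_mk, smul_eq_mul, RingHom.id_apply]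
    exact Prod.ext (by ring) (by ring)
  left_inv x := by ext <;> dsimp only <;> rw [div_eq_iff hΔ] <;> ring
  right_inv x := by ext <;> dsimp only <;> rw [mul_div_assoc', mul_div_assoc', ← add_div, div_eq_iff hΔ] <;> ring


/-- Lemma preceding Proposition 5: on the set `V = {v : v₂ < -2ρ_l/T_s}` of
non-grazing touchdown velocities, the Cartesian-to-leg-frame map
`h(v) = R(-β(v)) v`, with affine touchdown angle law
`β(v) = (T_s/(2ρ_l)) v₁ + k_p (v₁ - v₁*)`, has nonsingular Jacobian and is
hence a local diffeomorphism on `V`. -/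
theorem stmt_8 (Ts ρl kp v1s : ℝ) (hTs : 0 < Ts) (hρl : 0 < ρl) (hkp : 0 ≤ kp)
    (β : ℝ × ℝ → ℝ)
    (hβ : ∀ v : ℝ × ℝ, β v = Ts / (2 * ρl) * v.1 + kp * (v.1 - v1s))
    (h : ℝ × ℝ → ℝ × ℝ)
    (hh : ∀ v : ℝ × ℝ, h v =
      (Real.cos (-β v) * v.1 - Real.sin (-β v) * v.2,
       Real.sin (-β v) * v.1 + Real.cos (-β v) * v.2)) :
    ∀ v : ℝ × ℝ, v.2 < -2 * ρl / Ts →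
      Function.Bijective (fderiv ℝ h v) ∧
      ∃ s ∈ nhds v, Set.InjOn h s := by
  intro v hv
  obtain ⟨a, ha⟩ : ∃ a : ℝ, a = -(Ts / (2 * ρl) + kp) := ⟨_, rfl⟩
  obtain ⟨b, hb⟩ : ∃ b : ℝ, b = kp * v1s := ⟨_, rfl⟩
  have hθ : ∀ w : ℝ × ℝ, -β w = a * w.1 + b := by
    intro w; rw [hβ, ha, hb]; ring
  have hfun : h = fun w : ℝ × ℝ =>
      (Real.cos (a * w.1 + b) * w.1 - Real.sin (a * w.1 + b) * w.2,
       Real.sin (a * w.1 + b) * w.1 + Real.cos (a * w.1 + b) * w.2) := by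
    funext w; rw [hh w, hθ w]
  obtain ⟨P, hP⟩ : ∃ P : ℝ, P = Real.cos (a * v.1 + b) := ⟨_, rfl⟩
  obtain ⟨S, hS⟩ : ∃ S : ℝ, S = Real.sin (a * v.1 + b) := ⟨_, rfl⟩
  have hPS : P ^ 2 + S ^ 2 = 1 := by rw [hP, hS]; exact Real.cos_sq_add_sin_sq _
  have hdet : (-(a * v.1 * S) + (P - a * v.2 * P)) * P -
      (-S) * (a * v.1 * P + (S - a * v.2 * S)) = 1 - a * v.2 := by
    linear_combination (1 - a * v.2) * hPS
  have hΔ : (-(a * v.1 * S) + (P - a * v.2 * P)) * P -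
      (-S) * (a * v.1 * P + (S - a * v.2 * S)) ≠ 0 := by
    rw [hdet]
    have hv2 : v.2 * Ts < -2 * ρl := by
      have := (lt_div_iff₀ hTs).mp hv
      linarith
    have h1 : Ts / (2 * ρl) * v.2 < -1 := by
      rw [div_mul_eq_mul_div, div_lt_iff₀ (by positivity)]
      nlinarith
    have h2 : kp * v.2 ≤ 0 := by
      have : v.2 < 0 := by nlinarith
      exact mul_nonpos_of_nonneg_of_nonpos hkp this.le
    have : 1 - a * v.2 < 0 := by rw [ha]; nlinarith
    exact ne_of_lt this
  set E : (ℝ × ℝ) ≃L[ℝ] (ℝ × ℝ) :=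
    (mk2 (-(a * v.1 * S) + (P - a * v.2 * P)) (-S)
      (a * v.1 * P + (S - a * v.2 * S)) P hΔ).toContinuousLinearEquiv with hE
  have hθd : HasFDerivAt (fun w : ℝ × ℝ => a * w.1 + b)
      (a • ContinuousLinearMap.fst ℝ ℝ ℝ) v := by
    simpa using (hasFDerivAt_fst.const_mul a).add_const b
  have hcosd := hθd.cos
  have hsind := hθd.sin
  have hfst : HasFDerivAt (fun w : ℝ × ℝ => w.1) (ContinuousLinearMap.fst ℝ ℝ ℝ) v :=
    hasFDerivAt_fst
  have hsnd : HasFDerivAt (fun w : ℝ × ℝ => w.2) (ContinuousLinearMap.snd ℝ ℝ ℝ) v :=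
    hasFDerivAt_snd
  have hhas' := ((hcosd.mul hfst).sub (hsind.mul hsnd)).prodMk
    ((hsind.mul hfst).add (hcosd.mul hsnd))
  have hcoe : (E : (ℝ × ℝ) →L[ℝ] (ℝ × ℝ)) =
      ((Real.cos (a * v.1 + b) • ContinuousLinearMap.fst ℝ ℝ ℝ +
          v.1 • (-Real.sin (a * v.1 + b) • (a • ContinuousLinearMap.fst ℝ ℝ ℝ))) -
        (Real.sin (a * v.1 + b) • ContinuousLinearMap.snd ℝ ℝ ℝ +
          v.2 • (Real.cos (a * v.1 + b) • (a • ContinuousLinearMap.fst ℝ ℝ ℝ)))).prod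
       ((Real.sin (a * v.1 + b) • ContinuousLinearMap.fst ℝ ℝ ℝ +
          v.1 • (Real.cos (a * v.1 + b) • (a • ContinuousLinearMap.fst ℝ ℝ ℝ))) +
        (Real.cos (a * v.1 + b) • ContinuousLinearMap.snd ℝ ℝ ℝ +
          v.2 • (-Real.sin (a * v.1 + b) • (a • ContinuousLinearMap.fst ℝ ℝ ℝ)))) := by
    refine ContinuousLinearMap.ext fun w => ?_
    rw [hE]
    simp only [ContinuousLinearEquiv.coe_coe, LinearEquiv.coe_toContinuousLinearEquiv,
      ContinuousLinearMap.prod_apply, ContinuousLinearMap.add_apply,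
      ContinuousLinearMap.sub_apply, ContinuousLinearMap.smul_apply,
      ContinuousLinearMap.coe_fst', ContinuousLinearMap.coe_snd', smul_eq_mul]
    show ((mk2 _ _ _ _ hΔ : (ℝ × ℝ) →ₗ[ℝ] (ℝ × ℝ)) w) = _
    simp only [mk2, LinearMap.coe_mk, AddHom.coe_mk, LinearEquiv.coe_coe, LinearEquiv.coe_mk]
    rw [hP, hS]
    exact Prod.ext (by ring) (by ring)
  have hhas : HasFDerivAt h (E : (ℝ × ℝ) →L[ℝ] (ℝ × ℝ)) v := by
    rw [hfun, hcoe]; exact hhas'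
  have hcd : ContDiffAt ℝ 1 h v := by
    rw [hfun]
    have hcθ : ContDiff ℝ 1 (fun w : ℝ × ℝ => a * w.1 + b) :=
      (contDiff_const.mul contDiff_fst).add contDiff_const
    exact (((Real.contDiff_cos.comp hcθ).mul contDiff_fst).sub
        ((Real.contDiff_sin.comp hcθ).mul contDiff_snd)).prodMk
      (((Real.contDiff_sin.comp hcθ).mul contDiff_fst).add
        ((Real.contDiff_cos.comp hcθ).mul contDiff_snd)) |>.contDiffAt
  have hstrict : HasStrictFDerivAt h (E : (ℝ × ℝ) →L[ℝ] (ℝ × ℝ)) v := by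
    have := hcd.hasStrictFDerivAt one_ne_zero
    rwa [hhas.fderiv] at this
  refine ⟨?_, ?_⟩
  · rw [hhas.fderiv]; exact E.bijective
  · exact ⟨(hstrict.toOpenPartialHomeomorph h).source,
      (hstrict.toOpenPartialHomeomorph h).open_source.mem_nhds
        hstrict.mem_toOpenPartialHomeomorph_source,
      (hstrict.toOpenPartialHomeomorph h).injOn⟩
end
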